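/- arXiv:2006.03705 — 9 statements merged into one kernel-verified Lean document; each statement's English description precedes it below -/
import Mathlib

section
/- There exists a finite join-semilattice with at least one maximal ideal but no prime ideals. Concretely, the join-semilattice of subsets {xyz, xy, xz, yz, ∅} of a three-element set {x,y,z} (ordered by inclusion, with join = union) has three maximal ideals and no prime ideals. -/
/-- `I` is an ideal of the join-semilattice `L ⊆ 𝒫 X` (ordered by inclusion,
join = union): a subset of `L` that is a down-set in `L` and closed under unions. -/
def IsIdealIn {X : Type*} (L I : Set (Set X)) : Prop :=
  I ⊆ L ∧ (∀ a ∈ I, ∀ b ∈ L, b ⊆ a → b ∈ I) ∧ (∀ a ∈ I, ∀ b ∈ I, a ∪ b ∈ I)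

/-- `F` is a filter of `L`: a nonempty up-set in `L` containing a lower bound
for any two of its elements. -/
def IsFilterIn {X : Type*} (L F : Set (Set X)) : Prop :=
  F ⊆ L ∧ F.Nonempty ∧ (∀ a ∈ F, ∀ b ∈ L, a ⊆ b → b ∈ F) ∧
    (∀ a ∈ F, ∀ b ∈ F, ∃ c ∈ F, c ⊆ a ∧ c ⊆ b)

/-- A prime ideal: a nonempty ideal whose complement (in `L`) is a filter. -/
def IsPrimeIdealIn {X : Type*} (L I : Set (Set X)) : Prop :=
  IsIdealIn L I ∧ I.Nonempty ∧ IsFilterIn L (L \ I)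

/-- A maximal ideal: an ideal not containing the top element `univ`, every
strictly larger ideal of `L` containing `univ`. -/
def IsMaxIdealIn {X : Type*} (L I : Set (Set X)) : Prop :=
  IsIdealIn L I ∧ Set.univ ∉ I ∧ ∀ J, IsIdealIn L J → I ⊂ J → Set.univ ∈ J

/-!
Write `L = C ∪ {∅, univ}`, where any two distinct coatoms `p, q ∈ C` have union `univ`; then
`∅` is their only common lower bound in `L`. Hence `{p, ∅}` is a maximal ideal
for every coatom `p`, while a prime ideal `I` would contain `∅`, miss `univ`, and therefore
contain at most one coatom; with three coatoms, two of them lie in the filter `L \ I`, whose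
common lower bound `∅` would then lie in both `I` and `L \ I`.
-/

open Set

theorem pair_ne_pair_of_ne {α : Type*} {a b c : α} (h : a ≠ b) : ({a, c} : Set α) ≠ {b, c} := by
  rw [Ne, pair_eq_pair_iff]
  rintro (⟨hab, -⟩ | ⟨rfl, rfl⟩)
  exacts [h hab, h rfl]

section Coatoms

variable {X : Type*} {C : Set (Set X)}

theorem eq_or_eq_empty_of_subset_coatom (hC : C.Pairwise fun p q => p ∪ q = univ)
    (huniv : univ ∉ C) {p b : Set X} (hp : p ∈ C) (hb : b ∈ insert univ (insert ∅ C))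
    (hbp : b ⊆ p) : b = p ∨ b = ∅ := by
  rcases hb with rfl | rfl | hb
  · exact absurd (univ_subset_iff.mp hbp ▸ hp) huniv
  · exact Or.inr rfl
  · by_contra! hne
    have hunion : b ∪ p = univ := hC hb hp hne.1
    rw [union_eq_right.mpr hbp] at hunion
    exact huniv (hunion ▸ hp)

theorem isMaxIdealIn_pair_empty (hC : C.Pairwise fun p q => p ∪ q = univ)
    (huniv : univ ∉ C) {p : Set X} (hp : p ∈ C) :
    IsMaxIdealIn (insert univ (insert ∅ C)) {p, ∅} := by
  refine ⟨⟨?_, ?_, ?_⟩, ?_, ?_⟩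
  · rintro a (rfl | rfl)
    · exact mem_insert_of_mem _ (mem_insert_of_mem _ hp)
    · exact mem_insert_of_mem _ (mem_insert _ _)
  · rintro a (rfl | rfl) b hb hba
    · exact eq_or_eq_empty_of_subset_coatom hC huniv hp hb hba
    · exact Or.inr (subset_empty_iff.mp hba)
  · rintro a (rfl | rfl) b (rfl | rfl) <;> simp
  · rintro (h | h)
    · exact huniv (h ▸ hp)
    · exact huniv (eq_univ_of_univ_subset (h ▸ empty_subset p) ▸ hp)
  · rintro J ⟨hJL, hJdown, hJunion⟩ ⟨hpJ, hJp⟩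
    obtain ⟨b, hbJ, hb⟩ := not_subset.mp hJp
    rcases hJL hbJ with rfl | rfl | hbC
    · exact hbJ
    · exact absurd (Or.inr rfl) hb
    · have hbp : b ≠ p := fun h => hb (Or.inl h)
      exact hC hp hbC hbp.symm ▸ hJunion p (hpJ (Or.inl rfl)) b hbJ

theorem not_isPrimeIdealIn_of_three_coatoms (hC : C.Pairwise fun p q => p ∪ q = univ)
    (huniv : univ ∉ C) {p q r : Set X} (hp : p ∈ C) (hq : q ∈ C) (hr : r ∈ C)
    (hpq : p ≠ q) (hpr : p ≠ r) (hqr : q ≠ r) (I : Set (Set X)) :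
    ¬ IsPrimeIdealIn (insert univ (insert ∅ C)) I := by
  rintro ⟨⟨-, hIdown, hIunion⟩, ⟨a, haI⟩, -, ⟨f, hfF⟩, hFup, hFlb⟩
  have hempty : ∅ ∈ I := hIdown a haI ∅ (mem_insert_of_mem _ (mem_insert _ _)) (empty_subset a)
  have huniv_notMem : univ ∉ I := (hFup f hfF univ (mem_insert _ _) (subset_univ f)).2
  have hmemL : ∀ {x}, x ∈ C → x ∈ insert univ (insert ∅ C) :=
    fun hx => mem_insert_of_mem _ (mem_insert_of_mem _ hx)
  have hnotMem : ∀ {x y}, x ∈ C → y ∈ C → x ≠ y → x ∈ I → y ∉ I :=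
    fun hx hy hxy hxI hyI => huniv_notMem (hC hx hy hxy ▸ hIunion _ hxI _ hyI)
  -- the only common lower bound of two distinct coatoms is `∅ ∈ I`
  have hmem : ∀ {x y}, x ∈ C → y ∈ C → x ≠ y → x ∉ I → y ∈ I := by
    intro x y hx hy hxy hxI
    by_contra hyI
    obtain ⟨c, ⟨hcL, hcI⟩, hcx, hcy⟩ := hFlb x ⟨hmemL hx, hxI⟩ y ⟨hmemL hy, hyI⟩
    obtain rfl | rfl := eq_or_eq_empty_of_subset_coatom hC huniv hx hcL hcx
    · obtain rfl | rfl := eq_or_eq_empty_of_subset_coatom hC huniv hy hcL hcy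
      exacts [hxy rfl, hcI hempty]
    · exact hcI hempty
  by_cases hpI : p ∈ I
  · exact hnotMem hp hr hpr hpI (hmem hq hr hqr (hnotMem hp hq hpq hpI))
  · exact hnotMem hq hr hqr (hmem hp hq hpq hpI) (hmem hp hr hpr hpI)

end Coatoms

/-- The join-semilattice `{xyz, xy, xz, yz, ∅}` of subsets of a three-element
set has three (distinct) maximal ideals but no prime ideals. -/
theorem finite_semilattice_with_maximal_but_no_prime_ideals
    (L : Set (Set (Fin 3)))
    (hL : L = {Set.univ, {0, 1}, {0, 2}, {1, 2}, ∅}) :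
    (∃ m₁ m₂ m₃ : Set (Set (Fin 3)), m₁ ≠ m₂ ∧ m₁ ≠ m₃ ∧ m₂ ≠ m₃ ∧
      IsMaxIdealIn L m₁ ∧ IsMaxIdealIn L m₂ ∧ IsMaxIdealIn L m₃) ∧
    ∀ I : Set (Set (Fin 3)), ¬ IsPrimeIdealIn L I := by
  set C : Set (Set (Fin 3)) := {{0, 1}, {0, 2}, {1, 2}}
  have hLC : L = insert univ (insert ∅ C) := by
    rw [hL]; ext; simp only [mem_insert_iff, mem_singleton_iff, C]; tauto
  have hC : C.Pairwise fun p q => p ∪ q = univ := by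
    rintro p (rfl | rfl | rfl) q (rfl | rfl | rfl) hpq <;>
      first | exact absurd rfl hpq | (ext i; fin_cases i <;> simp)
  have huniv : univ ∉ C := by simp [C, Set.ext_iff, Fin.forall_fin_succ]
  obtain ⟨h₁₂, h₁₃, h₂₃⟩ : ({0, 1} : Set (Fin 3)) ≠ {0, 2} ∧ ({0, 1} : Set (Fin 3)) ≠ {1, 2} ∧
      ({0, 2} : Set (Fin 3)) ≠ {1, 2} := by
    simp [Set.ext_iff, Fin.forall_fin_succ]
  have hmax : ∀ p ∈ C, IsMaxIdealIn L {p, ∅} :=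
    fun p hp => hLC ▸ isMaxIdealIn_pair_empty hC huniv hp
  refine ⟨⟨_, _, _, pair_ne_pair_of_ne h₁₂, pair_ne_pair_of_ne h₁₃, pair_ne_pair_of_ne h₂₃,
    hmax {0, 1} (by simp [C]), hmax {0, 2} (by simp [C]), hmax {1, 2} (by simp [C])⟩, ?_⟩
  exact hLC ▸ not_isPrimeIdealIn_of_three_coatoms hC huniv (by simp [C]) (by simp [C])
    (by simp [C]) h₁₂ h₁₃ h₂₃
end

section
/- Let U be an up-set of a join-semilattice L, and let R' be any ∨-congruence strictly containing R^U. Then the R'-class containing U strictly contains U. Consequently, R^U is the strongest ∨-congruence on L in which U is an equivalence class. -/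
/-- The Pierce relation `R^U` on a join-semilattice, for a subset `U`. -/
def PierceRel {α : Type*} [SemilatticeSup α] (U : Set α) (a a' : α) : Prop :=
  ∀ x : α, x ⊔ a ∈ U ↔ x ⊔ a' ∈ U

/-- A ∨-congruence on a join-semilattice. -/
def IsSupCongruence {α : Type*} [SemilatticeSup α] (R : α → α → Prop) : Prop :=
  Equivalence R ∧ ∀ a a' b : α, R a a' → R (a ⊔ b) (a' ⊔ b)

/-- Let `U` be an up-set of a join-semilattice `L`.  (1) Any ∨-congruence `R'`
strictly containing `R^U` has its class containing `U` strictly larger than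
`U`.  (2) Consequently, `R^U` is the strongest ∨-congruence in which `U` is a
single equivalence class. -/
theorem pierce_strongest_congruence {α : Type*} [SemilatticeSup α] (U : Set α)
    (hU : IsUpperSet U) :
    (∀ R' : α → α → Prop, IsSupCongruence R' →
      (∀ a b : α, PierceRel U a b → R' a b) →
      (∃ a b : α, R' a b ∧ ¬ PierceRel U a b) →
      ∃ a : α, a ∉ U ∧ ∃ u ∈ U, R' u a) ∧
    (∀ R' : α → α → Prop, IsSupCongruence R' →
      (∀ u ∈ U, ∀ b : α, R' u b ↔ b ∈ U) →
      ∀ a b : α, R' a b → PierceRel U a b) := by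
  constructor
  · rintro R' ⟨hEq, hCong⟩ _ ⟨a, b, hab, hnp⟩
    simp only [PierceRel, not_forall] at hnp
    obtain ⟨x, hx⟩ := hnp
    have h1 : R' (x ⊔ a) (x ⊔ b) := by
      have := hCong a b x hab
      simpa [sup_comm] using this
    by_cases h2 : x ⊔ a ∈ U
    · have h3 : x ⊔ b ∉ U := fun h => hx ⟨fun _ => h, fun _ => h2⟩
      exact ⟨x ⊔ b, h3, x ⊔ a, h2, h1⟩
    · have h3 : x ⊔ b ∈ U := by
        by_contra h3
        exact hx ⟨fun h => absurd h h2, fun h => absurd h h3⟩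
      exact ⟨x ⊔ a, h2, x ⊔ b, h3, hEq.symm h1⟩
  · rintro R' ⟨hEq, hCong⟩ hclass a b hab x
    have h1 : R' (x ⊔ a) (x ⊔ b) := by
      have := hCong a b x hab
      simpa [sup_comm] using this
    constructor
    · intro h; exact (hclass _ h _).mp h1
    · intro h; exact (hclass _ h _).mp (hEq.symm h1)
end

section
/- In a complete lattice L, if c is a compact element then the congruence R^c := R^{↑c} preserves arbitrary joins: if A₀, A₁ ⊆ L have the same sets of R^c-classes, then (⋁A₀, ⋁A₁) ∈ R^c. -/
/-- The Pierce relation `R^c := R^{↑c}` on a complete lattice. -/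
def PierceRelPt {α : Type*} [CompleteLattice α] (c : α) (a a' : α) : Prop :=
  ∀ x : α, c ≤ x ⊔ a ↔ c ≤ x ⊔ a'

private lemma pierce_aux {α : Type*} [CompleteLattice α] (c : α)
    (A₀ A₁ : Set α)
    (h₀ : ∀ a ∈ A₀, ∃ a' ∈ A₁, PierceRelPt c a a') :
    ∀ F : Finset α, ↑F ⊆ A₀ → ∀ x : α, c ≤ x ⊔ F.sup id → c ≤ x ⊔ sSup A₁ := by
  classical
  intro F
  induction F using Finset.induction_on with
  | empty =>
      intro _ x hx
      simpa using le_trans (by simpa using hx) (le_sup_left : x ≤ x ⊔ sSup A₁)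
  | @insert a F ha ih =>
      intro hsub x hx
      have haA : a ∈ A₀ := hsub (by simp)
      obtain ⟨a', ha', hrel⟩ := h₀ a haA
      have hx' : c ≤ (x ⊔ F.sup id) ⊔ a := by
        simpa [Finset.sup_insert, sup_assoc, sup_comm, sup_left_comm] using hx
      have hx'' : c ≤ (x ⊔ F.sup id) ⊔ a' := (hrel _).mp hx'
      have : c ≤ (x ⊔ a') ⊔ F.sup id := by
        simpa [sup_assoc, sup_comm, sup_left_comm] using hx''
      have hres := ih (fun b hb => hsub (by simp [hb])) (x ⊔ a') this
      have ha'le : a' ≤ sSup A₁ := le_sSup ha'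
      calc c ≤ (x ⊔ a') ⊔ sSup A₁ := hres
        _ = x ⊔ (a' ⊔ sSup A₁) := by rw [sup_assoc]
        _ = x ⊔ sSup A₁ := by rw [sup_eq_right.mpr ha'le]

private lemma pierce_dir {α : Type*} [CompleteLattice α] (c : α)
    (hc : ∀ X : Set α, c ≤ sSup X → ∃ F : Finset α, ↑F ⊆ X ∧ c ≤ F.sup id)
    (A₀ A₁ : Set α)
    (h₀ : ∀ a ∈ A₀, ∃ a' ∈ A₁, PierceRelPt c a a')
    (x : α) (hx : c ≤ x ⊔ sSup A₀) : c ≤ x ⊔ sSup A₁ := by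
  classical
  have hx' : c ≤ sSup (insert x A₀) := by
    simpa [sSup_insert] using hx
  obtain ⟨F, hFsub, hF⟩ := hc _ hx'
  set F' : Finset α := F.filter (· ∈ A₀) with hF'
  have hsub : ↑F' ⊆ A₀ := by
    intro b hb
    simp only [hF', Finset.coe_filter, Set.mem_setOf_eq, Finset.mem_filter] at hb
    exact hb.2
  have hle : F.sup id ≤ x ⊔ F'.sup id := by
    apply Finset.sup_le
    intro b hb
    rcases hFsub hb with hbx | hbA
    · exact le_sup_of_le_left (le_of_eq hbx)
    · exact le_sup_of_le_right (Finset.le_sup (f := id) (by simp [hF', hb, hbA]))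
  exact pierce_aux c A₀ A₁ h₀ F' hsub x (le_trans hF (by simpa [sup_assoc] using hle))

/-- If `c` is a compact element of a complete lattice, then `R^c` preserves
arbitrary joins: if `A₀` and `A₁` have the same sets of `R^c`-classes, then
`(⋁A₀, ⋁A₁) ∈ R^c`. -/
theorem pierce_compact_preserves_sSup {α : Type*} [CompleteLattice α] (c : α)
    (hc : ∀ X : Set α, c ≤ sSup X → ∃ F : Finset α, ↑F ⊆ X ∧ c ≤ F.sup id)
    (A₀ A₁ : Set α)
    (h₀ : ∀ a ∈ A₀, ∃ a' ∈ A₁, PierceRelPt c a a')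
    (h₁ : ∀ a' ∈ A₁, ∃ a ∈ A₀, PierceRelPt c a a') :
    PierceRelPt c (sSup A₀) (sSup A₁) := by
  intro x
  constructor
  · exact pierce_dir c hc A₀ A₁ h₀ x
  · exact pierce_dir c hc A₁ A₀
      (fun a' ha' => by obtain ⟨a, ha, hr⟩ := h₁ a' ha'; exact ⟨a, ha, fun y => (hr y).symm⟩) x
end

section
/- A join-semilattice L with top element 1 is conjunctive if and only if for all a, b ∈ L with b ≰ a there exists a maximal ideal of L containing a but not b. Equivalently, L is conjunctive iff every principal ideal is an intersection of maximal ideals. -/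
/-- An ideal of a join-semilattice: a down-set closed under joins. -/
def IsIdeal {α : Type*} [SemilatticeSup α] (I : Set α) : Prop :=
  (∀ ⦃a b : α⦄, a ∈ I → b ≤ a → b ∈ I) ∧ ∀ ⦃a b : α⦄, a ∈ I → b ∈ I → a ⊔ b ∈ I

/-- A maximal ideal of a join-semilattice with top: an ideal not containing `⊤`
such that every strictly larger ideal contains `⊤`. -/
def IsMaxIdeal {α : Type*} [SemilatticeSup α] [OrderTop α] (m : Set α) : Prop :=
  IsIdeal m ∧ (⊤ : α) ∉ m ∧ ∀ J : Set α, IsIdeal J → m ⊂ J → (⊤ : α) ∈ J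

/-- Conjunctivity: for `b ≰ a` there is `w` with `a ≤ w < ⊤` and `w ⊔ b = ⊤`. -/
def Conjunctive (α : Type*) [SemilatticeSup α] [OrderTop α] : Prop :=
  ∀ a b : α, ¬ b ≤ a → ∃ w : α, a ≤ w ∧ w ≠ ⊤ ∧ w ⊔ b = ⊤

lemma conj_to_sep {α : Type*} [SemilatticeSup α] [OrderTop α] (hc : Conjunctive α) :
    ∀ a b : α, ¬ b ≤ a → ∃ m : Set α, IsMaxIdeal m ∧ a ∈ m ∧ b ∉ m := by
  intro a b hba
  obtain ⟨w, haw, hw, hwb⟩ := hc a b hba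
  set S : Set (Set α) := {J | IsIdeal J ∧ w ∈ J ∧ (⊤ : α) ∉ J}
  have h0 : {x : α | x ≤ w} ∈ S := by
    refine ⟨⟨fun x y hx hy => le_trans hy hx, fun x y hx hy => sup_le hx hy⟩, le_refl w, ?_⟩
    simp only [Set.mem_setOf_eq, top_le_iff]
    exact hw
  have hzorn : ∀ c ⊆ S, IsChain (· ⊆ ·) c → c.Nonempty → ∃ ub ∈ S, ∀ s ∈ c, s ⊆ ub := by
    intro c hcS hchain hne
    refine ⟨⋃₀ c, ⟨⟨?_, ?_⟩, ?_, ?_⟩, fun s hs => Set.subset_sUnion_of_mem hs⟩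
    · rintro x y ⟨J, hJ, hx⟩ hy
      exact ⟨J, hJ, (hcS hJ).1.1 hx hy⟩
    · rintro x y ⟨J, hJ, hx⟩ ⟨K, hK, hy⟩
      rcases hchain.total hJ hK with h | h
      · exact ⟨K, hK, (hcS hK).1.2 (h hx) hy⟩
      · exact ⟨J, hJ, (hcS hJ).1.2 hx (h hy)⟩
    · obtain ⟨J, hJ⟩ := hne
      exact ⟨J, hJ, (hcS hJ).2.1⟩
    · rintro ⟨J, hJ, hx⟩
      exact (hcS hJ).2.2 hx
  obtain ⟨M, hsub, hM⟩ := zorn_subset_nonempty S hzorn _ h0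
  obtain ⟨⟨hMid, hwM, htM⟩, hmax⟩ := hM
  have hbM : b ∉ M := fun hb => htM (hwb ▸ hMid.2 hwM hb)
  refine ⟨M, ⟨hMid, htM, ?_⟩, hMid.1 hwM haw, hbM⟩
  intro J hJ hMJ
  by_contra htJ
  exact hMJ.2 (hmax ⟨hJ, hMJ.1 hwM, htJ⟩ hMJ.1)

lemma sep_to_conj {α : Type*} [SemilatticeSup α] [OrderTop α]
    (h : ∀ a b : α, ¬ b ≤ a → ∃ m : Set α, IsMaxIdeal m ∧ a ∈ m ∧ b ∉ m) :
    Conjunctive α := by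
  intro a b hba
  obtain ⟨m, ⟨⟨hdown, hjoin⟩, htm, hmax⟩, ham, hbm⟩ := h a b hba
  -- ideal generated by m ∪ {b}
  set J : Set α := {x | ∃ c ∈ m, x ≤ c ⊔ b}
  have hJ : IsIdeal J := by
    constructor
    · rintro x y ⟨c, hc, hx⟩ hy; exact ⟨c, hc, hy.trans hx⟩
    · rintro x y ⟨c, hc, hx⟩ ⟨d, hd, hy⟩
      exact ⟨c ⊔ d, hjoin hc hd, sup_le (hx.trans (sup_le_sup le_sup_left le_rfl))
        (hy.trans (sup_le_sup le_sup_right le_rfl))⟩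
  have hmJ : m ⊂ J := by
    constructor
    · intro x hx; exact ⟨x, hx, le_sup_left⟩
    · intro hsub
      exact hbm (hsub ⟨a, ham, le_sup_right⟩)
  have htJ := hmax J hJ hmJ
  obtain ⟨c, hc, htc⟩ := htJ
  refine ⟨c ⊔ a, le_sup_right, fun h => htm (h ▸ hjoin hc ham), ?_⟩
  have : c ⊔ b = ⊤ := top_le_iff.mp htc
  rw [eq_top_iff, ← this]
  exact sup_le (le_sup_left.trans (sup_le_sup le_sup_left (le_refl b))) le_sup_right

/-- A join-semilattice with `1` is conjunctive iff for all `b ≰ a` there is a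
maximal ideal containing `a` but not `b`; equivalently, iff every principal
ideal is the intersection of the maximal ideals containing it. -/
theorem conjunctive_iff_maximal_ideals {α : Type*} [SemilatticeSup α] [OrderTop α] :
    (Conjunctive α ↔
      ∀ a b : α, ¬ b ≤ a → ∃ m : Set α, IsMaxIdeal m ∧ a ∈ m ∧ b ∉ m) ∧
    (Conjunctive α ↔
      ∀ a : α, {b : α | b ≤ a} =
        ⋂₀ {m : Set α | IsMaxIdeal m ∧ {b : α | b ≤ a} ⊆ m}) := by
  refine ⟨⟨conj_to_sep, sep_to_conj⟩, ⟨?_, ?_⟩⟩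
  · intro hc a
    apply Set.Subset.antisymm
    · intro b hb m hm
      exact hm.2 hb
    · intro b hb
      by_contra hba
      obtain ⟨m, hm, ham, hbm⟩ := conj_to_sep hc a b hba
      exact hbm (hb m ⟨hm, fun x hx => hm.1.1 ham hx⟩)
  · intro h
    apply sep_to_conj
    intro a b hba
    have := h a
    have hb : b ∉ ⋂₀ {m : Set α | IsMaxIdeal m ∧ {b : α | b ≤ a} ⊆ m} := by
      rw [← this]; exact hba
    simp only [Set.mem_sInter, Set.mem_setOf_eq, not_forall] at hb
    obtain ⟨m, ⟨hm, hsub⟩, hbm⟩ := hb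
    exact ⟨m, hm, hsub (le_refl a), hbm⟩
end

section
/- Let L be a conjunctive join-semilattice. The map a ↦ â from L to {0,1}^{max L}, where â(m) = 0 if a ∈ m and â(m) = 1 otherwise, is an injective ∨-morphism sending 1 to the constant function 1. -/
/-- The representation `a ↦ â : max L → {0,1}` (here `{0,1} = Prop` with
`False < True`), `â(m) = 1` iff `a ∉ m`. -/
def hat {α : Type*} [SemilatticeSup α] [OrderTop α] (a : α) :
    {m : Set α // IsMaxIdeal m} → Prop :=
  fun m => a ∉ m.1

/-- Key separation lemma: if `¬ b ≤ a`, there is a maximal ideal containing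
`a` but not `b`. -/
lemma exists_max_ideal {α : Type*} [SemilatticeSup α] [OrderTop α]
    (hconj : Conjunctive α) {a b : α} (hba : ¬ b ≤ a) :
    ∃ m : Set α, IsMaxIdeal m ∧ a ∈ m ∧ b ∉ m := by
  obtain ⟨w, haw, hw, hwb⟩ := hconj a b hba
  set S : Set (Set α) := {I | IsIdeal I ∧ w ∈ I ∧ (⊤ : α) ∉ I} with hS
  have hdw : {x : α | x ≤ w} ∈ S := by
    refine ⟨⟨fun x y hx hyx => le_trans hyx hx, fun x y hx hy => sup_le hx hy⟩,
      le_refl w, fun h => hw (top_le_iff.mp h)⟩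
  have hchains : ∀ c ⊆ S, IsChain (· ⊆ ·) c → c.Nonempty →
      ∃ ub ∈ S, ∀ s ∈ c, s ⊆ ub := by
    intro c hcS hchain hne
    obtain ⟨I0, hI0⟩ := hne
    refine ⟨⋃₀ c, ⟨⟨?_, ?_⟩, Set.mem_sUnion.2 ⟨I0, hI0, (hcS hI0).2.1⟩, ?_⟩,
      fun s hs => Set.subset_sUnion_of_mem hs⟩
    · rintro x y ⟨I, hI, hxI⟩ hyx
      exact ⟨I, hI, (hcS hI).1.1 hxI hyx⟩
    · rintro x y ⟨I, hI, hxI⟩ ⟨J, hJ, hyJ⟩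
      rcases hchain.total hI hJ with h | h
      · exact ⟨J, hJ, (hcS hJ).1.2 (h hxI) hyJ⟩
      · exact ⟨I, hI, (hcS hI).1.2 hxI (h hyJ)⟩
    · rintro ⟨I, hI, htI⟩
      exact (hcS hI).2.2 htI
  obtain ⟨M, hsub, hM, hMmax⟩ := zorn_subset_nonempty S hchains _ hdw
  obtain ⟨hMI, hwM, htM⟩ := hM
  have hbM : b ∉ M := fun hb => htM (hwb ▸ hMI.2 hwM hb)
  refine ⟨M, ⟨hMI, htM, fun J hJ hMJ => ?_⟩, hsub haw, hbM⟩
  by_contra htJ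
  have : J ∈ S := ⟨hJ, hMJ.1 hwM, htJ⟩
  exact hMJ.2 (hMmax this hMJ.1)

/-- For a conjunctive join-semilattice `L` (with at least two elements),
`a ↦ â` is an injective ∨-morphism into `{0,1}^{max L}` sending `1` to the
constant function `1`. -/
theorem hat_injective_sup_morphism {α : Type*} [SemilatticeSup α] [OrderTop α]
    [Nontrivial α] (hconj : Conjunctive α) :
    Function.Injective (hat (α := α)) ∧
    (∀ a b : α, hat (a ⊔ b) = hat a ⊔ hat b) ∧
    hat (⊤ : α) = ⊤ := by
  refine ⟨?_, ?_, ?_⟩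
  · intro a b hab
    have key : ∀ x y : α, hat x = hat y → y ≤ x := by
      intro x y hxy
      by_contra hyx
      obtain ⟨m, hm, hxm, hym⟩ := exists_max_ideal hconj hyx
      have := congrFun hxy ⟨m, hm⟩
      simp only [hat] at this
      exact (this ▸ hym) hxm
    exact le_antisymm (key b a hab.symm) (key a b hab)
  · intro a b
    funext m
    have hI := m.2.1
    simp only [hat, Pi.sup_apply, sup_Prop_eq, eq_iff_iff]
    constructor
    · intro h
      by_contra hc
      push_neg at hc
      exact h (hI.2 hc.1 hc.2)
    · rintro (h | h) hsup
      · exact h (hI.1 hsup le_sup_left)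
      · exact h (hI.1 hsup le_sup_right)
  · funext m
    exact eq_true m.2.2.1
end

section
/- Let L be a conjunctive join-semilattice. The space Spec_Max L = max L, with the topology generated by the subbase {coz a : a ∈ L}, is a compact T₁ space. -/
/-- The topology on `max L` generated by the subbase of cozero sets
`coz a = {m : a ∉ m}`. -/
def specMaxTopology (α : Type*) [SemilatticeSup α] [OrderTop α] :
    TopologicalSpace {m : Set α // IsMaxIdeal m} :=
  TopologicalSpace.generateFrom
    {S : Set {m : Set α // IsMaxIdeal m} | ∃ a : α, S = {m | a ∉ m.1}}

/-- The cozero set of `a`. -/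
def cozSet {α : Type*} [SemilatticeSup α] [OrderTop α] (a : α) :
    Set {m : Set α // IsMaxIdeal m} := {m | a ∉ m.1}

lemma cozSet_open {α : Type*} [SemilatticeSup α] [OrderTop α] (a : α) :
    @IsOpen {m : Set α // IsMaxIdeal m} (specMaxTopology α) (cozSet a) :=
  TopologicalSpace.isOpen_generateFrom_of_mem ⟨a, rfl⟩

lemma cozSet_sup {α : Type*} [SemilatticeSup α] [OrderTop α] (a b : α) :
    cozSet (a ⊔ b) = cozSet a ∪ cozSet b := by
  ext n
  simp only [cozSet, Set.mem_setOf_eq, Set.mem_union]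
  constructor
  · intro hn
    by_contra hc
    push_neg at hc
    exact hn (n.2.1.2 hc.1 hc.2)
  · rintro (hn | hn) hsup
    · exact hn (n.2.1.1 hsup le_sup_left)
    · exact hn (n.2.1.1 hsup le_sup_right)

/-- Every ideal avoiding `⊤` extends to a maximal ideal. -/
lemma exists_maxIdeal_superset {α : Type*} [SemilatticeSup α] [OrderTop α]
    {I : Set α} (hI : IsIdeal I) (hT : (⊤ : α) ∉ I) :
    ∃ m : Set α, IsMaxIdeal m ∧ I ⊆ m := by
  obtain ⟨m, hIm, hmS, hmax⟩ :=
    zorn_subset_nonempty {J : Set α | IsIdeal J ∧ (⊤ : α) ∉ J}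
      (fun c hcS hc hne => by
        refine ⟨⋃₀ c, ⟨⟨?_, ?_⟩, ?_⟩, fun s hs => Set.subset_sUnion_of_mem hs⟩
        · rintro a b ⟨s, hsc, has⟩ hba
          exact ⟨s, hsc, (hcS hsc).1.1 has hba⟩
        · rintro a b ⟨s, hsc, has⟩ ⟨t, htc, hbt⟩
          rcases hc.total hsc htc with h | h
          · exact ⟨t, htc, (hcS htc).1.2 (h has) hbt⟩
          · exact ⟨s, hsc, (hcS hsc).1.2 has (h hbt)⟩
        · rintro ⟨s, hsc, hts⟩
          exact (hcS hsc).2 hts)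
      I ⟨hI, hT⟩
  refine ⟨m, ⟨hmS.1, hmS.2, fun J hJ hmJ => by_contra fun hTJ => ?_⟩, hIm⟩
  exact hmJ.not_subset (hmax ⟨hJ, hTJ⟩ hmJ.subset)

/-- For a conjunctive join-semilattice `L` with at least two elements,
`Spec_Max L` with the cozero subbase topology is a compact T₁ space. -/
theorem specMax_compact_t1 {α : Type*} [SemilatticeSup α] [OrderTop α]
    [Nontrivial α] (hconj : Conjunctive α) :
    @CompactSpace {m : Set α // IsMaxIdeal m} (specMaxTopology α) ∧
    @T1Space {m : Set α // IsMaxIdeal m} (specMaxTopology α) := by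
  constructor
  · -- compactness, via ultrafilters
    rw [← @isCompact_univ_iff _ (specMaxTopology α),
      @isCompact_iff_ultrafilter_le_nhds _ (specMaxTopology α)]
    intro F _
    by_contra h
    push_neg at h
    -- for each point, some cozero neighbourhood is not in F
    have key : ∀ n : {m : Set α // IsMaxIdeal m}, ∃ a : α, a ∉ n.1 ∧ cozSet a ∉ F := by
      intro n
      by_contra hn
      push_neg at hn
      refine absurd ?_ (h n (Set.mem_univ n))
      have hnh : @nhds {m : Set α // IsMaxIdeal m} (specMaxTopology α) n =
          ⨅ s ∈ {s | n ∈ s ∧ s ∈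
            {S : Set {m : Set α // IsMaxIdeal m} | ∃ a : α, S = {m | a ∉ m.1}}}, Filter.principal s :=
        TopologicalSpace.nhds_generateFrom
      rw [hnh]
      refine le_iInf₂ fun s hs => ?_
      obtain ⟨hns, a, rfl⟩ := hs
      exact Filter.le_principal_iff.2 (hn a hns)
    -- the set of `a` with `cozSet a ∉ F` is an ideal avoiding ⊤
    have hAideal : IsIdeal {a : α | cozSet a ∉ F} := by
      constructor
      · intro a b ha hba hb
        refine ha (F.1.sets_of_superset hb ?_)
        intro n hn hna
        exact hn (n.2.1.1 hna hba)
      · intro a b ha hb hab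
        rw [cozSet_sup, Ultrafilter.union_mem_iff] at hab
        rcases hab with h' | h'
        · exact ha h'
        · exact hb h'
    have hAT : (⊤ : α) ∉ {a : α | cozSet a ∉ F} := by
      intro hT
      refine hT (F.1.sets_of_superset Filter.univ_mem ?_)
      intro n _
      exact n.2.2.1
    obtain ⟨m, hm, hAm⟩ := exists_maxIdeal_superset hAideal hAT
    obtain ⟨a, ham, haF⟩ := key ⟨m, hm⟩
    exact ham (hAm haF)
  · -- T1
    rw [@t1Space_iff_exists_open _ (specMaxTopology α)]
    rintro m n hmn
    have hns : ¬ n.1 ⊆ m.1 := by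
      intro hsub
      have hne : n.1 ≠ m.1 := fun h => hmn (Subtype.ext h.symm)
      exact m.2.2.1 (n.2.2.2 m.1 m.2.1 ⟨hsub, fun h => hne (le_antisymm hsub h)⟩)
    obtain ⟨a, han, ham⟩ := Set.not_subset.1 hns
    exact ⟨cozSet a, cozSet_open a, ham, not_not.2 han⟩
end

section
/- Let X be a set with at least two elements and L ⊆ P(X) a family of subsets containing X, closed under finite unions, forming a T₁ subbase for a compact topology on X. Then: (a) L, as a join-semilattice under union with top X, is conjunctive; and (b) the map x ↦ m_x := {a ∈ L : x ∉ a} is a homeomorphism of X with Spec_Max L. -/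
/-- The cozero-subbase topology on the set of maximal ideals of `L`. -/
def specMaxTopIn {X : Type*} (L : Set (Set X)) :
    TopologicalSpace {m : Set (Set X) // IsMaxIdealIn L m} :=
  TopologicalSpace.generateFrom
    {S | ∃ a ∈ L, S = {m : {m : Set (Set X) // IsMaxIdealIn L m} | a ∉ m.1}}

/-!
Compactness turns the T₁ separation of points into a separation of points from members of `L`:
if `x ∈ b ∈ L`, the members of `L` missing `x` cover the closed set `bᶜ`, and since they are
closed under unions a single one `w` does, so that `b ∪ w = X`. This gives conjunctivity and
shows that `m_x` is maximal. Conversely an ideal not containing `X` cannot cover `X`, again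
by compactness, so it lies inside some `m_x`; hence every maximal ideal is an `m_x`. Finally
`x ↦ m_x` pulls `coz a` back to `a`, so it is a bijection identifying the two topologies.
-/

open Set TopologicalSpace

theorem IsCompact.elim_supClosed_cover {X : Type*} [TopologicalSpace X] {K : Set X}
    (hK : IsCompact K) {S : Set (Set X)} (hS : SupClosed S) (hSo : ∀ s ∈ S, IsOpen s)
    (hne : S.Nonempty) (hcover : K ⊆ ⋃₀ S) : ∃ s ∈ S, K ⊆ s := by
  have : Nonempty S := hne.to_subtype
  obtain ⟨⟨s, hs⟩, hKs⟩ := hK.elim_directed_cover (fun s : S => s.1) (fun s => hSo s.1 s.2)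
    (by rwa [← sUnion_eq_iUnion]) hS.directedOn.directed_val
  exact ⟨s, hs, hKs⟩

section PointIdeal

variable {X : Type*} {L : Set (Set X)}

variable (L) in
def pointIdeal (x : X) : Set (Set X) := {a ∈ L | x ∉ a}

theorem supClosed_pointIdeal (hL : SupClosed L) (x : X) : SupClosed (pointIdeal L x) :=
  fun _ ha _ hb => ⟨hL ha.1 hb.1, not_or.2 ⟨ha.2, hb.2⟩⟩

theorem isIdealIn_pointIdeal (hL : SupClosed L) (x : X) : IsIdealIn L (pointIdeal L x) :=
  ⟨fun _ ha => ha.1, fun _ ha _ hb hba => ⟨hb, fun hx => ha.2 (hba hx)⟩,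
    fun _ ha _ hb => supClosed_pointIdeal hL x ha hb⟩

theorem univ_not_mem_pointIdeal (x : X) : univ ∉ pointIdeal L x :=
  fun h => h.2 (mem_univ x)

theorem pointIdeal_injective (ht1 : ∀ x y : X, x ≠ y → ∃ a ∈ L, x ∈ a ∧ y ∉ a) :
    Function.Injective (pointIdeal L) := by
  intro x y hxy
  by_contra hne
  obtain ⟨a, haL, hxa, hya⟩ := ht1 x y hne
  have hax : a ∈ pointIdeal L x := hxy ▸ ⟨haL, hya⟩
  exact hax.2 hxa

variable [TopologicalSpace X] [CompactSpace X]

theorem exists_mem_pointIdeal_union_eq_univ [Nontrivial X] (hL : SupClosed L)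
    (hLo : ∀ a ∈ L, IsOpen a) (ht1 : ∀ x y : X, x ≠ y → ∃ a ∈ L, x ∈ a ∧ y ∉ a)
    {x : X} {b : Set X} (hb : b ∈ L) (hxb : x ∈ b) :
    ∃ w ∈ pointIdeal L x, b ∪ w = univ := by
  have hne : (pointIdeal L x).Nonempty := by
    obtain ⟨y, hy⟩ := exists_ne x
    obtain ⟨a, haL, -, hxa⟩ := ht1 y x hy
    exact ⟨a, haL, hxa⟩
  have hcover : bᶜ ⊆ ⋃₀ pointIdeal L x := by
    intro z hz
    obtain ⟨a, haL, hza, hxa⟩ := ht1 z x (ne_of_mem_of_not_mem hxb hz).symm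
    exact ⟨a, ⟨haL, hxa⟩, hza⟩
  obtain ⟨w, hw, hbw⟩ := (hLo b hb).isClosed_compl.isCompact.elim_supClosed_cover
    (supClosed_pointIdeal hL x) (fun a ha => hLo a ha.1) hne hcover
  exact ⟨w, hw, compl_subset_iff_union.1 hbw⟩

theorem isMaxIdealIn_pointIdeal [Nontrivial X] (hL : SupClosed L)
    (hLo : ∀ a ∈ L, IsOpen a) (ht1 : ∀ x y : X, x ≠ y → ∃ a ∈ L, x ∈ a ∧ y ∉ a) (x : X) :
    IsMaxIdealIn L (pointIdeal L x) := by
  refine ⟨isIdealIn_pointIdeal hL x, univ_not_mem_pointIdeal x, fun J hJ hxJ => ?_⟩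
  obtain ⟨b, hbJ, hbx⟩ := exists_of_ssubset hxJ
  have hxb : x ∈ b := by_contra fun hxb => hbx ⟨hJ.1 hbJ, hxb⟩
  obtain ⟨w, hw, hbw⟩ := exists_mem_pointIdeal_union_eq_univ hL hLo ht1 (hJ.1 hbJ) hxb
  exact hbw ▸ hJ.2.2 b hbJ w (hxJ.1 hw)

theorem IsIdealIn.exists_subset_pointIdeal [Nonempty X] (hLo : ∀ a ∈ L, IsOpen a)
    {m : Set (Set X)} (hm : IsIdealIn L m) (hmu : univ ∉ m) :
    ∃ x, m ⊆ pointIdeal L x := by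
  by_contra! hx
  have hcover : univ ⊆ ⋃₀ m := by
    intro z _
    obtain ⟨a, ham, ha⟩ := not_subset.1 (hx z)
    exact ⟨a, ham, by_contra fun hza => ha ⟨hm.1 ham, hza⟩⟩
  have hne : m.Nonempty := by
    obtain ⟨a, ham, -⟩ := hcover (mem_univ (Classical.arbitrary X))
    exact ⟨a, ham⟩
  obtain ⟨a, ham, ha⟩ := isCompact_univ.elim_supClosed_cover (fun _ ha _ hb => hm.2.2 _ ha _ hb)
    (fun a ha => hLo a (hm.1 ha)) hne hcover
  exact hmu (univ_subset_iff.1 ha ▸ ham)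

theorem IsMaxIdealIn.exists_eq_pointIdeal [Nonempty X] (hL : SupClosed L)
    (hLo : ∀ a ∈ L, IsOpen a)
    {m : Set (Set X)} (hm : IsMaxIdealIn L m) : ∃ x, m = pointIdeal L x := by
  obtain ⟨x, hmx⟩ := hm.1.exists_subset_pointIdeal hLo hm.2.1
  refine ⟨x, hmx.eq_of_not_ssubset fun hlt => ?_⟩
  exact univ_not_mem_pointIdeal x (hm.2.2 _ (isIdealIn_pointIdeal hL x) hlt)

theorem exists_union_eq_univ_of_not_subset [Nontrivial X] (hL : SupClosed L)
    (hLo : ∀ a ∈ L, IsOpen a) (ht1 : ∀ x y : X, x ≠ y → ∃ a ∈ L, x ∈ a ∧ y ∉ a)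
    {a b : Set X} (ha : a ∈ L) (hb : b ∈ L) (hba : ¬ b ⊆ a) :
    ∃ w ∈ L, a ⊆ w ∧ w ≠ univ ∧ w ∪ b = univ := by
  obtain ⟨x, hxb, hxa⟩ := not_subset.1 hba
  obtain ⟨w, ⟨hwL, hxw⟩, hbw⟩ := exists_mem_pointIdeal_union_eq_univ hL hLo ht1 hb hxb
  refine ⟨a ∪ w, hL ha hwL, subset_union_left, fun h => ?_, eq_univ_of_subset ?_ hbw⟩
  · exact (h ▸ mem_univ x : x ∈ a ∪ w).elim hxa hxw
  · exact union_subset subset_union_right (subset_union_right.trans subset_union_left)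

end PointIdeal

theorem induced_specMaxTopIn {X : Type*} {L : Set (Set X)} (f : X → {m // IsMaxIdealIn L m})
    (hf : ∀ x, (f x).1 = pointIdeal L x) : (specMaxTopIn L).induced f = generateFrom L := by
  have hpre : ∀ a ∈ L, f ⁻¹' {m | a ∉ m.1} = a := fun a ha => by
    ext x
    simp [hf, pointIdeal, ha]
  rw [specMaxTopIn, induced_generateFrom_eq]
  congr 1
  ext a
  constructor
  · rintro ⟨_, ⟨b, hb, rfl⟩, rfl⟩
    exact (hpre b hb).symm ▸ hb
  · exact fun ha => ⟨_, ⟨a, ha, rfl⟩, hpre a ha⟩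

theorem t1_subbase_representation_general {X : Type*} [Nontrivial X] (L : Set (Set X))
    (hunion : ∀ a ∈ L, ∀ b ∈ L, a ∪ b ∈ L)
    (ht1 : ∀ x y : X, x ≠ y → ∃ a ∈ L, x ∈ a ∧ y ∉ a)
    (hcpt : @CompactSpace X (TopologicalSpace.generateFrom L)) :
    (∀ a ∈ L, ∀ b ∈ L, ¬ b ⊆ a →
      ∃ w ∈ L, a ⊆ w ∧ w ≠ Set.univ ∧ w ∪ b = Set.univ) ∧
    (∃ f : X → {m : Set (Set X) // IsMaxIdealIn L m},
      (∀ x : X, (f x).1 = {a ∈ L | x ∉ a}) ∧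
      @IsHomeomorph X _ (TopologicalSpace.generateFrom L) (specMaxTopIn L) f) := by
  let : TopologicalSpace X := generateFrom L
  have hL : SupClosed L := fun a ha b hb => hunion a ha b hb
  have hLo : ∀ a ∈ L, IsOpen a := fun _ ha => isOpen_generateFrom_of_mem ha
  let f (x : X) : {m // IsMaxIdealIn L m} := ⟨pointIdeal L x, isMaxIdealIn_pointIdeal hL hLo ht1 x⟩
  have hinj : f.Injective := fun _ _ h => pointIdeal_injective ht1 (congrArg Subtype.val h)
  have hsurj : f.Surjective := by
    rintro ⟨m, hm⟩
    obtain ⟨x, rfl⟩ := hm.exists_eq_pointIdeal hL hLo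
    exact ⟨x, rfl⟩
  refine ⟨fun a ha b hb => exists_union_eq_univ_of_not_subset hL hLo ht1 ha hb, f, fun _ => rfl, ?_⟩
  let := specMaxTopIn L
  exact isHomeomorph_iff_isEmbedding_surjective.2
    ⟨⟨⟨(induced_specMaxTopIn f fun _ => rfl).symm⟩, hinj⟩, hsurj⟩

/-- If `X` has at least two points and `L ⊆ 𝒫 X` contains `X`, is closed under
finite unions, and is a T₁ subbase for a compact topology on `X`, then
(a) `L` is a conjunctive join-semilattice, and (b) `x ↦ m_x = {a ∈ L : x ∉ a}`
is a homeomorphism of `X` with `Spec_Max L`. -/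
theorem t1_subbase_representation {X : Type*} [Nontrivial X] (L : Set (Set X))
    (htop : Set.univ ∈ L) (hunion : ∀ a ∈ L, ∀ b ∈ L, a ∪ b ∈ L)
    (ht1 : ∀ x y : X, x ≠ y → ∃ a ∈ L, x ∈ a ∧ y ∉ a)
    (hcpt : @CompactSpace X (TopologicalSpace.generateFrom L)) :
    (∀ a ∈ L, ∀ b ∈ L, ¬ b ⊆ a →
      ∃ w ∈ L, a ⊆ w ∧ w ≠ Set.univ ∧ w ∪ b = Set.univ) ∧
    (∃ f : X → {m : Set (Set X) // IsMaxIdealIn L m},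
      (∀ x : X, (f x).1 = {a ∈ L | x ∉ a}) ∧
      @IsHomeomorph X _ (TopologicalSpace.generateFrom L) (specMaxTopIn L) f) :=
  t1_subbase_representation_general L hunion ht1 hcpt
end

section
/- A join-semilattice L is ideally conjunctive if and only if for all a, b ∈ L with b ≰ a there is a maximal proper ideal of L containing a but not b. -/
/-- The ideal generated by a set: the intersection of all ideals containing it. -/
def genIdeal {α : Type*} [SemilatticeSup α] (S : Set α) : Set α :=
  ⋂₀ {I : Set α | IsIdeal I ∧ S ⊆ I}

/-- Ideal conjunctivity: for `b ≰ a` there is an ideal `W` with `a ∈ W ≠ L`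
and `⟨W ∪ {b}⟩ = L`. -/
def IdeallyConjunctive (α : Type*) [SemilatticeSup α] : Prop :=
  ∀ a b : α, ¬ b ≤ a → ∃ W : Set α, IsIdeal W ∧ a ∈ W ∧ W ≠ Set.univ ∧
    genIdeal (W ∪ {b}) = Set.univ

/-- A maximal proper ideal: a proper ideal contained in no larger proper ideal. -/
def IsMaxProperIdeal {α : Type*} [SemilatticeSup α] (m : Set α) : Prop :=
  IsIdeal m ∧ m ≠ Set.univ ∧ ∀ J : Set α, IsIdeal J → m ⊂ J → J = Set.univ

lemma isIdeal_genIdeal {α : Type*} [SemilatticeSup α] (S : Set α) :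
    IsIdeal (genIdeal S) := by
  constructor
  · intro a b ha hle I hI
    exact hI.1.1 (ha I hI) hle
  · intro a b ha hb I hI
    exact hI.1.2 (ha I hI) (hb I hI)

lemma subset_genIdeal {α : Type*} [SemilatticeSup α] (S : Set α) :
    S ⊆ genIdeal S := fun x hx I hI => hI.2 hx

lemma genIdeal_subset {α : Type*} [SemilatticeSup α] {S I : Set α}
    (hI : IsIdeal I) (h : S ⊆ I) : genIdeal S ⊆ I :=
  fun _ hx => hx I ⟨hI, h⟩

/-- A join-semilattice is ideally conjunctive iff for all `b ≰ a` there is a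
maximal proper ideal containing `a` but not `b`. -/
theorem ideallyConjunctive_iff_maxProper {α : Type*} [SemilatticeSup α] :
    IdeallyConjunctive α ↔
      ∀ a b : α, ¬ b ≤ a → ∃ m : Set α, IsMaxProperIdeal m ∧ a ∈ m ∧ b ∉ m := by
  constructor
  · intro h a b hba
    obtain ⟨W, hW, haW, hWne, hgen⟩ := h a b hba
    have hbW : b ∉ W := by
      intro hb
      apply hWne
      have : W ∪ {b} ⊆ W := by
        intro x hx
        rcases hx with hx | hx
        · exact hx
        · exact hx ▸ hb
      have := genIdeal_subset hW this
      exact Set.eq_univ_of_univ_subset (hgen ▸ this)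
    -- Zorn on S = {I | ideal, W ⊆ I, b ∉ I}
    set S : Set (Set α) := {I | IsIdeal I ∧ W ⊆ I ∧ b ∉ I} with hS
    have hzorn : ∀ c ⊆ S, IsChain (· ⊆ ·) c → c.Nonempty →
        ∃ ub ∈ S, ∀ s ∈ c, s ⊆ ub := by
      intro c hcS hchain hcne
      refine ⟨⋃₀ c, ⟨⟨?_, ?_⟩, ?_, ?_⟩, fun s hs => Set.subset_sUnion_of_mem hs⟩
      · rintro x y ⟨I, hI, hxI⟩ hle
        exact ⟨I, hI, (hcS hI).1.1 hxI hle⟩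
      · rintro x y ⟨I, hI, hxI⟩ ⟨J, hJ, hyJ⟩
        rcases hchain.total hI hJ with hIJ | hJI
        · exact ⟨J, hJ, (hcS hJ).1.2 (hIJ hxI) hyJ⟩
        · exact ⟨I, hI, (hcS hI).1.2 hxI (hJI hyJ)⟩
      · obtain ⟨I, hI⟩ := hcne
        exact (hcS hI).2.1.trans (Set.subset_sUnion_of_mem hI)
      · rintro ⟨I, hI, hbI⟩
        exact (hcS hI).2.2 hbI
    obtain ⟨m, hWm, hmax⟩ :=
      zorn_subset_nonempty S hzorn W ⟨hW, subset_rfl, hbW⟩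
    have hmS : IsIdeal m ∧ W ⊆ m ∧ b ∉ m := hmax.prop
    refine ⟨m, ⟨hmS.1, ?_, ?_⟩, hWm haW, hmS.2.2⟩
    · intro he; exact hmS.2.2 (he ▸ Set.mem_univ b)
    · intro J hJ hmJ
      by_contra hJne
      have hbJ : b ∉ J := by
        intro hbJ
        apply hJne
        have : genIdeal (W ∪ {b}) ⊆ J := by
          apply genIdeal_subset hJ
          intro x hx
          rcases hx with hx | hx
          · exact hmJ.1 (hWm hx)
          · exact hx ▸ hbJ
        exact Set.eq_univ_of_univ_subset (hgen ▸ this)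
      have : J ⊆ m := hmax.2 ⟨hJ, fun x hx => hmJ.1 (hWm hx), hbJ⟩ hmJ.1
      exact hmJ.2 this
  · intro h a b hba
    obtain ⟨m, ⟨hm, hmne, hmax⟩, ham, hbm⟩ := h a b hba
    refine ⟨m, hm, ham, hmne, ?_⟩
    apply hmax
    · exact isIdeal_genIdeal _
    · constructor
      · exact fun x hx => subset_genIdeal _ (Or.inl hx)
      · intro hsub
        exact hbm (hsub (subset_genIdeal _ (Or.inr rfl)))
end

section
/- If L is a join-semilattice with top element 1, then L is ideally conjunctive if and only if L is conjunctive. -/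
/-- A join-semilattice with top is ideally conjunctive iff it is conjunctive. -/
theorem ideallyConjunctive_iff_conjunctive {α : Type*} [SemilatticeSup α]
    [OrderTop α] : IdeallyConjunctive α ↔ Conjunctive α := by
  constructor
  · intro h a b hba
    obtain ⟨W, hW, haW, hWne, hgen⟩ := h a b hba
    -- The set {x | ∃ w ∈ W, x ≤ w ⊔ b} is an ideal containing W ∪ {b}
    set J : Set α := {x | ∃ w ∈ W, x ≤ w ⊔ b} with hJ
    have hJideal : IsIdeal J := by
      constructor
      · rintro x y ⟨w, hw, hx⟩ hyx
        exact ⟨w, hw, hyx.trans hx⟩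
      · rintro x y ⟨w1, hw1, hx⟩ ⟨w2, hw2, hy⟩
        refine ⟨w1 ⊔ w2, hW.2 hw1 hw2, sup_le ?_ ?_⟩
        · exact hx.trans (sup_le_sup le_sup_left le_rfl)
        · exact hy.trans (sup_le_sup le_sup_right le_rfl)
    have hsub : W ∪ {b} ⊆ J := by
      rintro x (hx | hx)
      · exact ⟨x, hx, le_sup_left⟩
      · exact ⟨a, haW, le_trans (le_of_eq hx) le_sup_right⟩
    have htop : (⊤ : α) ∈ J := by
      have : (⊤ : α) ∈ genIdeal (W ∪ {b}) := by rw [hgen]; trivial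
      exact this J ⟨hJideal, hsub⟩
    obtain ⟨w, hw, hwt⟩ := htop
    refine ⟨w ⊔ a, le_sup_right, ?_, ?_⟩
    · intro he
      apply hWne
      ext x
      simp only [Set.mem_univ, iff_true]
      exact hW.1 (hW.2 hw haW) (he ▸ le_top : x ≤ w ⊔ a)
    · exact le_antisymm le_top (le_trans hwt (sup_le_sup le_sup_left le_rfl))
  · intro h a b hba
    obtain ⟨w, haw, hwne, hwb⟩ := h a b hba
    refine ⟨{x | x ≤ w}, ⟨fun x y hx hyx => hyx.trans hx,
      fun x y hx hy => sup_le hx hy⟩, haw, ?_, ?_⟩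
    · intro he
      apply hwne
      have : (⊤ : α) ∈ {x | x ≤ w} := he ▸ Set.mem_univ _
      exact top_le_iff.mp this
    · ext x
      simp only [Set.mem_univ, iff_true]
      intro I hI
      obtain ⟨⟨hdown, hsup⟩, hsub⟩ := hI
      have hwI : w ∈ I := hsub (Or.inl le_rfl)
      have hbI : b ∈ I := hsub (Or.inr rfl)
      have : w ⊔ b ∈ I := hsup hwI hbI
      rw [hwb] at this
      exact hdown this le_top
end
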